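/- Let ℓ ≥ 1, let H = (V, ℰ) be a hypergraph, and let v ∈ V be a vertex whose twin class has at least ℓ elements. If H has a representative support with fewer than ℓ vertices, then H − v also has a representative support with fewer than ℓ vertices. -/

import Mathlib

/-- A hypergraph: a finite vertex set `V ⊆ ℕ` together with a finite family of
hyperedges, each a subset of `V` of size at least 2. -/
structure NatHypergraph where
  V : Finset ℕ
  E : Finset (Finset ℕ)
  edge_sub : ∀ F ∈ E, F ⊆ V
  edge_card : ∀ F ∈ E, 2 ≤ F.card

namespace NatHypergraph

/-- `ℰ(v)`: the set of hyperedges incident with `v`. -/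
def edgesAt (H : NatHypergraph) (v : ℕ) : Finset (Finset ℕ) :=
  H.E.filter (fun F => v ∈ F)

/-- `w` covers `v` if `ℰ(v) ⊆ ℰ(w)`. -/
def Covers (H : NatHypergraph) (w v : ℕ) : Prop :=
  H.edgesAt v ⊆ H.edgesAt w

/-- `u` and `v` are twins if `ℰ(u) = ℰ(v)`. -/
def AreTwins (H : NatHypergraph) (u v : ℕ) : Prop :=
  H.edgesAt u = H.edgesAt v

/-- The twin class of `v`: all vertices with the same incident hyperedges as `v`. -/
def twinClass (H : NatHypergraph) (v : ℕ) : Finset ℕ :=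
  H.V.filter (fun u => H.edgesAt u = H.edgesAt v)

/-- `H − v`: delete vertex `v`, removing it from every hyperedge and discarding
   the resulting sets of size less than 2. -/
def delete (H : NatHypergraph) (v : ℕ) : NatHypergraph where
  V := H.V.erase v
  E := (H.E.image (fun F => F.erase v)).filter (fun F => 2 ≤ F.card)
  edge_sub := by
    intro F hF
    simp only [Finset.mem_filter, Finset.mem_image] at hF
    obtain ⟨⟨F₀, hF₀, rfl⟩, -⟩ := hF
    intro x hx
    exact Finset.mem_erase.mpr ⟨(Finset.mem_erase.mp hx).1,
      H.edge_sub F₀ hF₀ (Finset.mem_erase.mp hx).2⟩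
  edge_card := fun F hF => (Finset.mem_filter.mp hF).2

end NatHypergraph

/-- All edges of the graph `G` have both endpoints in `W`
    (i.e. `G` is a graph on the vertex set `W`). -/
def EdgesWithin (G : SimpleGraph ℕ) (W : Finset ℕ) : Prop :=
  ∀ a b, G.Adj a b → a ∈ W ∧ b ∈ W

/-- `G` is a support for `H`: a graph on the vertex set of `H` in which every
    hyperedge induces a connected subgraph. -/
def IsSupport (H : NatHypergraph) (G : SimpleGraph ℕ) : Prop :=
  EdgesWithin G H.V ∧ ∀ F ∈ H.E, ((G.induce (F : Set ℕ)).Connected)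

/-- `G` is a representative support for `H` with vertex set `W ⊆ H.V`:
    (i) every hyperedge `F` with `|F ∩ W| ≥ 2` induces (on `F ∩ W`) a connected
    subgraph of `G`, and (ii) every vertex outside `W` is covered by a vertex of `W`. -/
def IsRepSupport (H : NatHypergraph) (W : Finset ℕ) (G : SimpleGraph ℕ) : Prop :=
  W ⊆ H.V ∧ EdgesWithin G W ∧
    (∀ F ∈ H.E, 2 ≤ (F ∩ W).card → ((G.induce ((F ∩ W : Finset ℕ) : Set ℕ)).Connected)) ∧
    (∀ v ∈ H.V \ W, ∃ w ∈ W, H.Covers w v)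

/-! Since `|W| < ℓ` twins of `v` exist, some twin `u` of `v` lies outside `W`. The transposition
of `u` and `v` fixes `V` and every hyperedge, so it carries `(W, G)` to a representative support
avoiding `v`, and a representative support avoiding `v` is one for `H − v` as it stands. -/

theorem Equiv.swap_apply_mem_iff {α : Type*} [DecidableEq α] {s : Finset α} {a b x : α}
    (h : a ∈ s ↔ b ∈ s) : Equiv.swap a b x ∈ s ↔ x ∈ s := by
  rcases eq_or_ne x a with rfl | hxa
  · simp [h]
  rcases eq_or_ne x b with rfl | hxb
  · simp [h]
  rw [Equiv.swap_apply_of_ne_of_ne hxa hxb]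

namespace NatHypergraph

variable {H : NatHypergraph}

theorem mem_edgesAt {v : ℕ} {F : Finset ℕ} : F ∈ H.edgesAt v ↔ F ∈ H.E ∧ v ∈ F :=
  Finset.mem_filter

theorem covers_iff {w x : ℕ} : H.Covers w x ↔ ∀ F ∈ H.E, x ∈ F → w ∈ F := by
  simp only [Covers, Finset.subset_iff, mem_edgesAt]
  exact ⟨fun h F hF hx => (h ⟨hF, hx⟩).2, fun h F hFx => ⟨hFx.1, h F hFx.1 hFx.2⟩⟩

theorem mem_twinClass {u v : ℕ} : u ∈ H.twinClass v ↔ u ∈ H.V ∧ H.AreTwins u v :=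
  Finset.mem_filter

theorem AreTwins.mem_iff {u v : ℕ} (h : H.AreTwins u v) {F : Finset ℕ} (hF : F ∈ H.E) :
    u ∈ F ↔ v ∈ F := by
  simpa [mem_edgesAt, hF] using Finset.ext_iff.mp h F

theorem mem_delete_E {v : ℕ} {F' : Finset ℕ} :
    F' ∈ (H.delete v).E ↔ (∃ F ∈ H.E, F.erase v = F') ∧ 2 ≤ F'.card := by
  simp [delete]

end NatHypergraph

open NatHypergraph

section

variable {H : NatHypergraph} {W : Finset ℕ} {G : SimpleGraph ℕ}

theorem IsRepSupport.map_equiv (h : IsRepSupport H W G) (σ : ℕ ≃ ℕ)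
    (hV : ∀ x, σ x ∈ H.V ↔ x ∈ H.V) (hE : ∀ F ∈ H.E, ∀ x, σ x ∈ F ↔ x ∈ F) :
    IsRepSupport H (W.map σ.toEmbedding) (G.map σ) := by
  obtain ⟨hWV, hGW, hconn, hcov⟩ := h
  refine ⟨?_, ?_, ?_, ?_⟩
  · intro x hx
    obtain ⟨w, hw, rfl⟩ := Finset.mem_map.mp hx
    exact (hV w).mpr (hWV hw)
  · rintro _ _ ⟨-, a, b, hab, rfl, rfl⟩
    exact ⟨Finset.mem_map_of_mem _ (hGW a b hab).1, Finset.mem_map_of_mem _ (hGW a b hab).2⟩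
  · intro F hF hcard
    have hinter : F ∩ W.map σ.toEmbedding = (F ∩ W).map σ.toEmbedding := by
      ext x
      simp only [Finset.mem_inter, Finset.mem_map_equiv, ← hE F hF (σ.symm x),
        Equiv.apply_symm_apply]
    rw [hinter, Finset.card_map] at hcard
    rw [hinter]
    have hbij : Set.BijOn σ ↑(F ∩ W) ↑((F ∩ W).map σ.toEmbedding) := by
      rw [Finset.coe_map]
      exact σ.injective.injOn.bijOn_image
    exact ((SimpleGraph.Iso.map σ G).induce hbij).connected_iff.mp (hconn F hF hcard)
  · intro x hx
    obtain ⟨hxV, hxW⟩ := Finset.mem_sdiff.mp hx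
    have hyW : σ.symm x ∉ W := by rwa [Finset.mem_map_equiv] at hxW
    have hyV : σ.symm x ∈ H.V := by rwa [← hV, Equiv.apply_symm_apply]
    obtain ⟨w, hw, hcov_w⟩ := hcov _ (Finset.mem_sdiff.mpr ⟨hyV, hyW⟩)
    refine ⟨σ w, Finset.mem_map_of_mem _ hw, covers_iff.mpr fun F hF hxF => ?_⟩
    have hyF : σ.symm x ∈ F := by rwa [← hE F hF, Equiv.apply_symm_apply]
    exact (hE F hF w).mpr (covers_iff.mp hcov_w F hF hyF)

theorem IsRepSupport.delete {v : ℕ} (h : IsRepSupport H W G) (hv : v ∉ W) :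
    IsRepSupport (H.delete v) W G := by
  obtain ⟨hWV, hGW, hconn, hcov⟩ := h
  have hWV' : W ⊆ (H.delete v).V := fun w hw =>
    Finset.mem_erase.mpr ⟨ne_of_mem_of_not_mem hw hv, hWV hw⟩
  refine ⟨hWV', hGW, ?_, ?_⟩
  · intro F' hF' hcard
    obtain ⟨⟨F, hF, rfl⟩, -⟩ := mem_delete_E.mp hF'
    rw [Finset.erase_inter, Finset.erase_eq_of_notMem (fun h => hv (Finset.mem_inter.mp h).2)]
      at hcard ⊢
    exact hconn F hF hcard
  · intro x hx
    obtain ⟨hxV', hxW⟩ := Finset.mem_sdiff.mp hx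
    obtain ⟨-, hxV⟩ := Finset.mem_erase.mp hxV'
    obtain ⟨w, hw, hcov_w⟩ := hcov x (Finset.mem_sdiff.mpr ⟨hxV, hxW⟩)
    refine ⟨w, hw, covers_iff.mpr fun F' hF' hxF' => ?_⟩
    obtain ⟨⟨F, hF, rfl⟩, -⟩ := mem_delete_E.mp hF'
    have hwF : w ∈ F := covers_iff.mp hcov_w F hF (Finset.mem_of_mem_erase hxF')
    exact Finset.mem_erase.mpr ⟨ne_of_mem_of_not_mem hw hv, hwF⟩

end

theorem delete_twin_keeps_small_repSupport_general
    (ℓ : ℕ)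
    (H : NatHypergraph) (v : ℕ) (hv : v ∈ H.V)
    (htc : ℓ ≤ (H.twinClass v).card)
    (hrep : ∃ (W : Finset ℕ) (G : SimpleGraph ℕ), IsRepSupport H W G ∧ W.card < ℓ) :
    ∃ (W' : Finset ℕ) (G' : SimpleGraph ℕ), IsRepSupport (H.delete v) W' G' ∧ W'.card < ℓ := by
  obtain ⟨W, G, hWG, hcard⟩ := hrep
  obtain ⟨u, hu, huW⟩ : ∃ u ∈ H.twinClass v, u ∉ W :=
    Finset.not_subset.mp fun hsub => (Finset.card_le_card hsub).not_gt (hcard.trans_le htc)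
  obtain ⟨huV, huv⟩ := mem_twinClass.mp hu
  let σ := Equiv.swap u v
  have hσ : IsRepSupport H (W.map σ.toEmbedding) (G.map σ) :=
    hWG.map_equiv σ (fun _ => Equiv.swap_apply_mem_iff (by simp [huV, hv]))
      (fun _ hF _ => Equiv.swap_apply_mem_iff (huv.mem_iff hF))
  have hvW : v ∉ W.map σ.toEmbedding := by simpa [Finset.mem_map_equiv, σ] using huW
  exact ⟨_, _, hσ.delete hvW, by rwa [Finset.card_map]⟩

/-- If the twin class of `v` has at least `ℓ ≥ 1` elements and `H`
has a representative support with fewer than `ℓ` vertices, then `H − v` also has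
a representative support with fewer than `ℓ` vertices. -/
theorem delete_twin_keeps_small_repSupport
    (ℓ : ℕ) (hℓ : 1 ≤ ℓ)
    (H : NatHypergraph) (v : ℕ) (hv : v ∈ H.V)
    (htc : ℓ ≤ (H.twinClass v).card)
    (hrep : ∃ (W : Finset ℕ) (G : SimpleGraph ℕ), IsRepSupport H W G ∧ W.card < ℓ) :
    ∃ (W' : Finset ℕ) (G' : SimpleGraph ℕ), IsRepSupport (H.delete v) W' G' ∧ W'.card < ℓ :=
  delete_twin_keeps_small_repSupport_general ℓ H v hv htc hrep
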